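/- The following are equivalent: (c₁) 𝒩₁ := cone 𝒱 + ℝ₊(0_{X*},1) is a closed and convex subset of X*×ℝ (weak*-topology on X* times the usual topology on ℝ); (d₁) for every c ∈ X* with inf(RLIP_c) > −∞ there exist v̄ = (v̄¹,v̄²) ∈ 𝒱 and λ̄ ≥ 0 such that c = −λ̄v̄¹ and −λ̄v̄² = inf(RLIP_c) (stable robust strong duality for the pair (RLIP_c)–(RLID¹_c)). -/

import Mathlib

/-! The inequalities `(x*, r)` valid on the feasible set `F` form a weak*-closed convex set
containing `𝒩₁`, and stable strong duality says exactly that each of them, in particular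
`(-c, -inf(RLIP_c))`, already lies in `𝒩₁`. So the theorem is a Farkas lemma: when `𝒩₁` is
closed and convex, a valid inequality outside it is separated from the cone `𝒩₁` by a functional
`(x*, r) ↦ ⟨x*, x₁⟩ + β r` with `β ≤ 0`, and walking from a feasible point in the direction `x₁`
(rescaled to stay feasible) violates the separated inequality. -/

open Pointwise

variable {X : Type*} [AddCommGroup X] [Module ℝ X] [TopologicalSpace X]
  [IsTopologicalAddGroup X] [ContinuousSMul ℝ X] [LocallyConvexSpace ℝ X] [T2Space X]
  {T : Type*}

/-- The cone generated by a set `A`: `cone A = {λa : λ ≥ 0, a ∈ A}`. -/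
def coneSet {E : Type*} [SMul ℝ E] (A : Set E) : Set E :=
  {p | ∃ l : ℝ, 0 ≤ l ∧ ∃ a ∈ A, p = l • a}

/-- The optimal value of the robust primal problem (RLIP_c). -/
noncomputable def infRLIP (U : T → Set (WeakDual ℝ X × ℝ)) (c : WeakDual ℝ X) : EReal :=
  ⨅ x : {x : X | ∀ t, ∀ v ∈ U t, v.1 x ≤ v.2}, ((c x.1 : ℝ) : EReal)

theorem exists_forall_nonpos_of_notMem_cone {Y : Type*} [AddCommGroup Y] [Module ℝ Y]
    [TopologicalSpace Y] [IsTopologicalAddGroup Y] [ContinuousSMul ℝ Y] [LocallyConvexSpace ℝ Y]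
    {C : Set Y} (hconv : Convex ℝ C) (hclosed : IsClosed C) (hzero : (0 : Y) ∈ C)
    (hsmul : ∀ t : ℝ, 0 ≤ t → ∀ q ∈ C, t • q ∈ C) {p : Y} (hp : p ∉ C) :
    ∃ f : StrongDual ℝ Y, (∀ q ∈ C, f q ≤ 0) ∧ 0 < f p := by
  obtain ⟨f, u, hC, hpu⟩ := geometric_hahn_banach_closed_point hconv hclosed hp
  have hu : 0 < u := by simpa using hC 0 hzero
  refine ⟨f, fun q hq => ?_, hu.trans hpu⟩
  by_contra! hfq
  have := hC _ (hsmul (u / f q) (div_nonneg hu.le hfq.le) q hq)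
  rw [map_smul, smul_eq_mul, div_mul_cancel₀ u hfq.ne'] at this
  exact this.false

section LinearInequalities

variable {E : Type*} [AddCommGroup E] [Module ℝ E] [TopologicalSpace E]

instance WeakDual.instLocallyConvexSpace : LocallyConvexSpace ℝ (WeakDual ℝ E) :=
  WeakBilin.locallyConvexSpace

theorem WeakDual.exists_prod_apply_eq (f : StrongDual ℝ (WeakDual ℝ E × ℝ)) :
    ∃ x : E, ∀ q : WeakDual ℝ E × ℝ, f q = q.1 x + q.2 * f (0, 1) := by
  obtain ⟨x, hx⟩ := LinearMap.dualEmbedding_surjective (topDualPairing ℝ E)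
    (f.comp (.inl ℝ _ ℝ))
  refine ⟨x, fun q => ?_⟩
  have h : f (q.1, 0) = q.1 x := (DFunLike.congr_fun hx q.1).symm
  calc f q = f ((q.1, 0) + q.2 • (0, 1)) := by congr 1; ext <;> simp
    _ = q.1 x + q.2 * f (0, 1) := by rw [map_add, map_smul, h, smul_eq_mul]

def solutionSet (V : Set (WeakDual ℝ E × ℝ)) : Set E :=
  {x | ∀ v ∈ V, v.1 x ≤ v.2}

def validIneqs (S : Set E) : Set (WeakDual ℝ E × ℝ) :=
  {p | ∀ x ∈ S, p.1 x ≤ p.2}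

def momentCone (V : Set (WeakDual ℝ E × ℝ)) : Set (WeakDual ℝ E × ℝ) :=
  coneSet V + {p | p.1 = 0 ∧ 0 ≤ p.2}

theorem isClosed_validIneqs (S : Set E) : IsClosed (validIneqs S) := by
  have : validIneqs S = ⋂ x ∈ S, {p : WeakDual ℝ E × ℝ | p.1 x ≤ p.2} := by
    ext; simp [validIneqs]
  rw [this]
  exact isClosed_biInter fun x _ =>
    isClosed_le ((WeakDual.eval_continuous x).comp continuous_fst) continuous_snd

theorem convex_validIneqs (S : Set E) : Convex ℝ (validIneqs S) := by
  intro p hp q hq a b ha hb hab x hx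
  have := hp x hx
  have := hq x hx
  show a * p.1 x + b * q.1 x ≤ a * p.2 + b * q.2
  gcongr

theorem mem_momentCone_iff {V : Set (WeakDual ℝ E × ℝ)} {p : WeakDual ℝ E × ℝ} :
    p ∈ momentCone V ↔ ∃ v ∈ V, ∃ l : ℝ, 0 ≤ l ∧ p.1 = l • v.1 ∧ l * v.2 ≤ p.2 := by
  constructor
  · rintro ⟨_, ⟨l, hl, v, hv, rfl⟩, w, ⟨hw₁, hw₂⟩, rfl⟩
    refine ⟨v, hv, l, hl, ?_, ?_⟩
    · simp [hw₁]
    · simpa using hw₂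
  · rintro ⟨v, hv, l, hl, h₁, h₂⟩
    refine ⟨l • v, ⟨l, hl, v, hv, rfl⟩, (0, p.2 - l * v.2), ⟨rfl, sub_nonneg.2 h₂⟩, ?_⟩
    ext
    · simp [h₁]
    · simp

theorem momentCone_subset_validIneqs (V : Set (WeakDual ℝ E × ℝ)) :
    momentCone V ⊆ validIneqs (solutionSet V) := by
  intro p hp x hx
  obtain ⟨v, hv, l, hl, h₁, h₂⟩ := mem_momentCone_iff.1 hp
  calc p.1 x = l * v.1 x := by rw [h₁]; rfl
    _ ≤ l * v.2 := mul_le_mul_of_nonneg_left (hx v hv) hl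
    _ ≤ p.2 := h₂

theorem subset_momentCone (V : Set (WeakDual ℝ E × ℝ)) : V ⊆ momentCone V :=
  fun v hv => mem_momentCone_iff.2 ⟨v, hv, 1, zero_le_one, by simp, by simp⟩

theorem mk_zero_mem_momentCone {V : Set (WeakDual ℝ E × ℝ)} (hV : V.Nonempty) {r : ℝ}
    (hr : 0 ≤ r) : ((0 : WeakDual ℝ E), r) ∈ momentCone V := by
  obtain ⟨v, hv⟩ := hV
  exact mem_momentCone_iff.2 ⟨v, hv, 0, le_rfl, by simp, by simpa using hr⟩

theorem smul_mem_momentCone {V : Set (WeakDual ℝ E × ℝ)} {t : ℝ} (ht : 0 ≤ t)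
    {p : WeakDual ℝ E × ℝ} (hp : p ∈ momentCone V) : t • p ∈ momentCone V := by
  obtain ⟨v, hv, l, hl, h₁, h₂⟩ := mem_momentCone_iff.1 hp
  refine mem_momentCone_iff.2 ⟨v, hv, t * l, mul_nonneg ht hl, ?_, ?_⟩
  · simp [h₁, smul_smul]
  · simpa [mul_assoc] using mul_le_mul_of_nonneg_left h₂ ht

theorem apply_le_mul_of_mem_validIneqs_solutionSet {V : Set (WeakDual ℝ E × ℝ)} {x₀ x₁ : E}
    (hx₀ : x₀ ∈ solutionSet V) {h : ℝ} (hh : 0 ≤ h) (hx₁ : ∀ v ∈ V, v.1 x₁ ≤ h * v.2)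
    {p : WeakDual ℝ E × ℝ} (hp : p ∈ validIneqs (solutionSet V)) : p.1 x₁ ≤ h * p.2 := by
  have hscaled : ∀ s : ℝ, 0 ≤ s → (1 + s * h)⁻¹ • (x₀ + s • x₁) ∈ solutionSet V := by
    intro s hs v hv
    rw [map_smul, map_add, map_smul, smul_eq_mul, smul_eq_mul, inv_mul_le_iff₀ (by positivity)]
    nlinarith [hx₀ v hv, hx₁ v hv]
  have hray : ∀ s : ℝ, 0 ≤ s → (p.1 x₀ - p.2) + s * (p.1 x₁ - h * p.2) ≤ 0 := by
    intro s hs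
    have hps := hp _ (hscaled s hs)
    rw [map_smul, map_add, map_smul, smul_eq_mul, smul_eq_mul,
      inv_mul_le_iff₀ (by positivity)] at hps
    linarith
  by_contra! hpos
  have hs := hray ((1 - (p.1 x₀ - p.2)) / (p.1 x₁ - h * p.2))
    (div_nonneg (by linarith [hp x₀ hx₀]) (by linarith))
  rw [div_mul_cancel₀ _ (by linarith)] at hs
  linarith

theorem validIneqs_subset_momentCone {V : Set (WeakDual ℝ E × ℝ)} (hV : V.Nonempty)
    (hS : (solutionSet V).Nonempty) (hclosed : IsClosed (momentCone V))
    (hconv : Convex ℝ (momentCone V)) : validIneqs (solutionSet V) ⊆ momentCone V := by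
  intro p hp
  by_contra hpN
  obtain ⟨f, hfN, hfp⟩ := exists_forall_nonpos_of_notMem_cone hconv hclosed
    (mk_zero_mem_momentCone hV le_rfl) (fun t ht q hq => smul_mem_momentCone ht hq) hpN
  obtain ⟨x₁, hf⟩ := WeakDual.exists_prod_apply_eq f
  have hβ : f (0, 1) ≤ 0 := hfN _ (mk_zero_mem_momentCone hV zero_le_one)
  have hx₁ : ∀ v ∈ V, v.1 x₁ ≤ -f (0, 1) * v.2 := fun v hv => by
    have hfv := hfN v (subset_momentCone V hv)
    rw [hf] at hfv
    linarith
  have hpx₁ := apply_le_mul_of_mem_validIneqs_solutionSet hS.some_mem (neg_nonneg.2 hβ) hx₁ hp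
  rw [hf] at hfp
  linarith

theorem isClosed_and_convex_momentCone_iff {V : Set (WeakDual ℝ E × ℝ)} (hV : V.Nonempty)
    (hS : (solutionSet V).Nonempty) :
    IsClosed (momentCone V) ∧ Convex ℝ (momentCone V) ↔
      validIneqs (solutionSet V) ⊆ momentCone V := by
  refine ⟨fun h => validIneqs_subset_momentCone hV hS h.1 h.2, fun h => ?_⟩
  rw [(momentCone_subset_validIneqs V).antisymm h]
  exact ⟨isClosed_validIneqs _, convex_validIneqs _⟩

theorem solutionSet_iUnion {ι : Type*} (U : ι → Set (WeakDual ℝ E × ℝ)) :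
    solutionSet (⋃ i, U i) = {x : E | ∀ i, ∀ v ∈ U i, v.1 x ≤ v.2} := by
  ext x
  simp only [solutionSet, Set.mem_ofPred_eq, Set.mem_iUnion, forall_exists_index]
  exact forall_comm

theorem coe_le_infRLIP_iff {ι : Type*} (U : ι → Set (WeakDual ℝ E × ℝ)) (c : WeakDual ℝ E)
    (r : ℝ) : (r : EReal) ≤ infRLIP U c ↔ (-c, -r) ∈ validIneqs (solutionSet (⋃ i, U i)) := by
  simp only [infRLIP, le_iInf_iff, EReal.coe_le_coe_iff, Subtype.forall, solutionSet_iUnion,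
    validIneqs]
  exact forall₂_congr fun x _ => neg_le_neg_iff.symm

theorem infRLIP_ne_top {ι : Type*} {U : ι → Set (WeakDual ℝ E × ℝ)}
    (hF : (solutionSet (⋃ i, U i)).Nonempty) (c : WeakDual ℝ E) : infRLIP U c ≠ ⊤ := by
  obtain ⟨x, hx⟩ := hF
  rw [solutionSet_iUnion] at hx
  exact ((iInf_le _ ⟨x, hx⟩).trans_lt (EReal.coe_lt_top (c x))).ne

def StableStrongDuality {ι : Type*} (U : ι → Set (WeakDual ℝ E × ℝ)) : Prop :=
  ∀ c : WeakDual ℝ E, ⊥ < infRLIP U c →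
    ∃ v ∈ ⋃ i, U i, ∃ l : ℝ, 0 ≤ l ∧ c = -(l • v.1) ∧ ((-(l * v.2) : ℝ) : EReal) = infRLIP U c

theorem stableStrongDuality_iff {ι : Type*} {U : ι → Set (WeakDual ℝ E × ℝ)}
    (hF : (solutionSet (⋃ i, U i)).Nonempty) :
    StableStrongDuality U ↔ validIneqs (solutionSet (⋃ i, U i)) ⊆ momentCone (⋃ i, U i) := by
  constructor
  · intro hd p hp
    have hle : ((-p.2 : ℝ) : EReal) ≤ infRLIP U (-p.1) :=
      (coe_le_infRLIP_iff U _ _).2 (by simpa using hp)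
    obtain ⟨v, hv, l, hl, hc, hval⟩ := hd (-p.1) ((EReal.bot_lt_coe _).trans_le hle)
    rw [← hval, EReal.coe_le_coe_iff] at hle
    exact mem_momentCone_iff.2 ⟨v, hv, l, hl, neg_injective hc, by linarith⟩
  · intro h c hc
    have hμ : ((infRLIP U c).toReal : EReal) = infRLIP U c :=
      EReal.coe_toReal (infRLIP_ne_top hF c) hc.ne'
    obtain ⟨v, hv, l, hl, h₁, h₂⟩ := mem_momentCone_iff.1 (h ((coe_le_infRLIP_iff U c _).1 hμ.le))
    refine ⟨v, hv, l, hl, neg_eq_iff_eq_neg.1 h₁, le_antisymm ?_ ?_⟩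
    · rw [coe_le_infRLIP_iff, neg_neg]
      exact momentCone_subset_validIneqs _ (mem_momentCone_iff.2 ⟨v, hv, l, hl, h₁, le_rfl⟩)
    · rw [← hμ, EReal.coe_le_coe_iff]
      linarith

end LinearInequalities

/-- Theorem 4.1, case i = 1: the robust moment cone 𝒩₁ = cone 𝒱 + ℝ₊(0,1) is closed and
convex iff stable robust strong duality holds for the pair (RLIP_c)-(RLID¹_c). -/
theorem stmt11 [Nonempty T] (U : T → Set (WeakDual ℝ X × ℝ)) (hU : ∀ t, (U t).Nonempty)
    (hF : {x : X | ∀ t, ∀ v ∈ U t, v.1 x ≤ v.2}.Nonempty) :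
    (IsClosed (coneSet (⋃ t, U t) + {p : WeakDual ℝ X × ℝ | p.1 = 0 ∧ 0 ≤ p.2}) ∧
      Convex ℝ (coneSet (⋃ t, U t) + {p : WeakDual ℝ X × ℝ | p.1 = 0 ∧ 0 ≤ p.2})) ↔
    (∀ c : WeakDual ℝ X, ⊥ < infRLIP U c →
      ∃ v ∈ ⋃ t, U t, ∃ l : ℝ, 0 ≤ l ∧ c = -(l • v.1) ∧
        ((-(l * v.2) : ℝ) : EReal) = infRLIP U c) := by
  obtain ⟨t⟩ := ‹Nonempty T›
  have hV : (⋃ t, U t).Nonempty := (hU t).mono (Set.subset_iUnion U t)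
  rw [← solutionSet_iUnion] at hF
  exact (isClosed_and_convex_momentCone_iff hV hF).trans (stableStrongDuality_iff hF).symm
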